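/- arXiv:0909.2409 — 7 statements merged into one kernel-verified Lean document; each statement's English description precedes it below -/
import Mathlib

section
/- Every ℝ-algebra automorphism σ of ℍ is inner by a unit quaternion: there exists a unit quaternion a such that σ(x) = a x a⁻¹ for all x ∈ ℍ. -/
/-!
Put `p = σ i` and `q = σ j`. The element `T x = ∑ σ(e) x e⁻¹`, summed over `e ∈ {1, i, j, k}`,
satisfies `p * T x = T x * i` and `q * T x = T x * j`: left multiplication by `σ(i)` and right
multiplication by `i` permute the four summands in the same way. Since `∑ e y e⁻¹ = 4 re y`, one
has `∑ T(e) e⁻¹ = 4`, so some `T e` is nonzero, and normalising it gives a unit quaternion `u`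
with `σ i = u i u⁻¹` and `σ j = u j u⁻¹`. An algebra map out of `ℍ` is determined by `i` and `j`.
-/

open Quaternion QuaternionAlgebra

section Intertwiner

variable {A : Type*} [Ring A] {P Q I J : A}

/-- With `P = σ i`, `Q = σ j`, `I = i`, `J = j` this is `∑ σ(e) x e⁻¹` over `e ∈ {1, i, j, k}`. -/
def intertwiner (P Q I J x : A) : A :=
  x - P * x * I - Q * x * J - P * Q * x * (I * J)

theorem mul_intertwiner_eq_intertwiner_mul_fst (hP : P * P = -1) (hI : I * I = -1)
    (hIJ : J * I = -(I * J)) (x : A) :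
    P * intertwiner P Q I J x = intertwiner P Q I J x * I := by
  have hP' (y : A) : P * (P * y) = -y := by rw [← mul_assoc, hP, neg_one_mul]
  have hI' (y : A) : I * (I * y) = -y := by rw [← mul_assoc, hI, neg_one_mul]
  simp only [intertwiner, mul_sub, sub_mul, mul_assoc, hP', hI, hI', hIJ, mul_neg, neg_neg,
    mul_one]
  abel

theorem mul_intertwiner_eq_intertwiner_mul_snd (hQ : Q * Q = -1) (hJ : J * J = -1)
    (hPQ : Q * P = -(P * Q)) (x : A) :
    Q * intertwiner P Q I J x = intertwiner P Q I J x * J := by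
  have hQ' (y : A) : Q * (Q * y) = -y := by rw [← mul_assoc, hQ, neg_one_mul]
  have hPQ' (y : A) : Q * (P * y) = -(P * (Q * y)) := by
    rw [← mul_assoc, hPQ, neg_mul, mul_assoc]
  simp only [intertwiner, mul_sub, sub_mul, mul_assoc, hQ', hPQ', hJ, mul_neg, neg_neg, mul_one]
  abel

/-- The left-hand side is `∑ T(e) e⁻¹` over `e ∈ {1, I, J, IJ}`, where `e⁻¹ = -e` for `e ≠ 1`. -/
theorem intertwiner_sum_eq_four (hI : I * I = -1) (hJ : J * J = -1) (hIJ : J * I = -(I * J)) :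
    intertwiner P Q I J 1 - intertwiner P Q I J I * I - intertwiner P Q I J J * J
      - intertwiner P Q I J (I * J) * (I * J) = 4 := by
  have hI' (y : A) : I * (I * y) = -y := by rw [← mul_assoc, hI, neg_one_mul]
  have hIJ' (y : A) : J * (I * y) = -(I * (J * y)) := by
    rw [← mul_assoc, hIJ, neg_mul, mul_assoc]
  simp only [intertwiner, sub_mul, mul_assoc, hI, hJ, hIJ, hI', hIJ', mul_neg, neg_neg, mul_one,
    neg_mul]
  abel_nf
  norm_num

variable (P Q) in
theorem exists_intertwiner_ne_zero (hI : I * I = -1) (hJ : J * J = -1) (hIJ : J * I = -(I * J))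
    (h4 : (4 : A) ≠ 0) : ∃ x, intertwiner P Q I J x ≠ 0 := by
  by_contra! h
  exact h4 (by simpa [h] using (intertwiner_sum_eq_four (P := P) (Q := Q) hI hJ hIJ).symm)

end Intertwiner

namespace QuaternionAlgebra.Basis

variable {R A : Type*} [CommRing R] [Ring A] [Algebra R A] (q : Basis A (-1 : R) 0 (-1))

theorem i_mul_i_eq_neg_one : q.i * q.i = -1 := by simp [q.i_mul_i]

theorem j_mul_j_eq_neg_one : q.j * q.j = -1 := by simp [q.j_mul_j]

theorem j_mul_i_eq_neg_i_mul_j : q.j * q.i = -(q.i * q.j) := by simp [q.j_mul_i, q.i_mul_j]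

theorem exists_ne_zero_mul_eq_mul (h4 : (4 : A) ≠ 0) (q' : Basis A (-1 : R) 0 (-1)) :
    ∃ b : A, b ≠ 0 ∧ q'.i * b = b * q.i ∧ q'.j * b = b * q.j := by
  obtain ⟨x, hx⟩ := exists_intertwiner_ne_zero q'.i q'.j q.i_mul_i_eq_neg_one
    q.j_mul_j_eq_neg_one q.j_mul_i_eq_neg_i_mul_j h4
  exact ⟨_, hx,
    mul_intertwiner_eq_intertwiner_mul_fst q'.i_mul_i_eq_neg_one q.i_mul_i_eq_neg_one
      q.j_mul_i_eq_neg_i_mul_j x,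
    mul_intertwiner_eq_intertwiner_mul_snd q'.j_mul_j_eq_neg_one q.j_mul_j_eq_neg_one
      q'.j_mul_i_eq_neg_i_mul_j x⟩

end QuaternionAlgebra.Basis

namespace Quaternion

theorem mem_unitary_of_norm_eq_one {a : ℍ} (ha : ‖a‖ = 1) : a ∈ unitary ℍ := by
  rw [Unitary.mem_iff, star_mul_self, self_mul_star, normSq_eq_norm_mul_self, ha]
  simp

theorem exists_unitary_eq_conj (σ : ℍ →ₐ[ℝ] ℍ) :
    ∃ u : unitary ℍ, σ = (Unitary.conjStarAlgAut ℝ ℍ u).toAlgEquiv.toAlgHom := by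
  obtain ⟨b, hb, hi, hj⟩ :=
    (show Basis ℍ (-1 : ℝ) 0 (-1) from Basis.self ℝ).exists_ne_zero_mul_eq_mul
      (fun h => four_ne_zero (congrArg QuaternionAlgebra.re h)) ((Basis.self ℝ).compHom σ)
  let u : unitary ℍ := ⟨‖b‖⁻¹ • b, mem_unitary_of_norm_eq_one (norm_smul_inv_norm hb)⟩
  have eq_conj {x y : ℍ} (h : y * b = b * x) : y = u * x * star (u : ℍ) := by
    have hu : y * u = u * x := by simp only [u, mul_smul_comm, smul_mul_assoc, h]
    rw [← hu, mul_assoc, Unitary.mul_star_self_of_mem u.2, mul_one]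
  exact ⟨u, Quaternion.hom_ext (eq_conj hi) (eq_conj hj)⟩

end Quaternion

/-- Every ℝ-algebra automorphism of ℍ is inner by a unit quaternion. -/
theorem quaternion_algAut_inner (σ : ℍ ≃ₐ[ℝ] ℍ) :
    ∃ a : ℍ, (a * star a).re = 1 ∧ ∀ x : ℍ, σ x = a * x * a⁻¹ := by
  obtain ⟨u, hu⟩ := exists_unitary_eq_conj σ.toAlgHom
  have inv_eq_star : (u : ℍ)⁻¹ = star (u : ℍ) :=
    inv_eq_of_mul_eq_one_right (Unitary.mul_star_self_of_mem u.2)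
  refine ⟨u, by simp, fun x => ?_⟩
  rw [inv_eq_star]
  exact congr($hu x)
end

section
/- For every unit quaternion a, the map ρ(a) : v ↦ a v a⁻¹ maps im ℍ to itself and restricts to an ℝ-linear isometry of im ℍ; the assignment a ↦ ρ(a) is a group homomorphism from the group of unit quaternions to the group of linear isometries of im ℍ, its kernel is {1, −1}, and its image consists exactly of the linear isometries of im ℍ of determinant 1. -/
/-! Conjugation by a unit quaternion preserves the real part and the norm, so it restricts to an
isometry `ρ(a)` of `im ℍ`. If `ρ(a) = 1` then `a` commutes with `i` and `j`, so `a` is real, i.e.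
`a = ±1`. Every unit `a ≠ -1` is the square of the unit `b = (1 + a) / ‖1 + a‖`, so
`det ρ(a) = (det ρ(b))² ≥ 0`, while `|det ρ(a)| = 1`; hence `det ρ(a) = 1`.
For a pure unit quaternion `u` one has `u v u = v - 2⟪u, v⟫ u`, so `-ρ(u)` is the reflection in
`u^⊥`. Reflections generate the orthogonal group, hence every isometry of `im ℍ` is `±ρ(a)`, and
`-ρ(a)` has determinant `(-1)³ = -1`. -/

open Quaternion

def imH : Submodule ℝ ℍ where
  carrier := {q | q.re = 0}
  add_mem' := by
    intro a b ha hb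
    simp only [Set.mem_setOf_eq] at *
    simp [ha, hb]
  zero_mem' := by simp
  smul_mem' := by
    intro c a ha
    simp only [Set.mem_setOf_eq] at *
    simp [ha]

open Module

namespace Quaternion

variable {R : Type*} [CommRing R]

theorem re_mul_mul_star (a v : ℍ[R]) : (a * v * star a).re = normSq a * v.re := by
  simp only [re_mul, imI_mul, imJ_mul, imK_mul, re_star, imI_star, imJ_star, imK_star,
    normSq_def']
  ring

theorem one_add_mul_one_add_of_normSq_eq_one {a : ℍ[R]} (ha : normSq a = 1) :
    (1 + a) * (1 + a) = normSq (1 + a) • a := by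
  rw [normSq_def'] at ha
  ext <;> simp only [re_mul, imI_mul, imJ_mul, imK_mul, re_add, imI_add, imJ_add, imK_add, re_one,
    imI_one, imJ_one, imK_one, re_smul, imI_smul, imJ_smul, imK_smul, smul_eq_mul, normSq_def']
  · linear_combination (-(1 + a.re)) * ha
  · linear_combination (-a.imI) * ha
  · linear_combination (-a.imJ) * ha
  · linear_combination (-a.imK) * ha

theorem mul_mul_self_of_re_eq_zero {u v : ℍ} (hu : u.re = 0) (hv : v.re = 0) :
    u * v * u = normSq u • v - (2 * inner ℝ u v) • u := by
  ext <;> simp only [re_mul, imI_mul, imJ_mul, imK_mul, re_star, imI_star, imJ_star, imK_star,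
    re_sub, imI_sub, imJ_sub, imK_sub, re_smul, imI_smul, imJ_smul, imK_smul, smul_eq_mul,
    inner_def, normSq_def', hu, hv] <;> ring

theorem eq_coe_re_of_forall_commute {a : ℍ} (h : ∀ v : ℍ, v.re = 0 → Commute a v) :
    a = a.re := by
  -- `i` and `j` are introduced through their coordinates: the simp lemmas for `ℍ` do not fire on
  -- the structure literal `⟨0, 1, 0, 0⟩`, which elaborates at type `ℍ[ℝ,-1,0,-1]`.
  obtain ⟨i, hi⟩ : ∃ i : ℍ, i.re = 0 ∧ i.imI = 1 ∧ i.imJ = 0 ∧ i.imK = 0 := ⟨⟨0, 1, 0, 0⟩, by simp⟩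
  obtain ⟨j, hj⟩ : ∃ j : ℍ, j.re = 0 ∧ j.imI = 0 ∧ j.imJ = 1 ∧ j.imK = 0 := ⟨⟨0, 0, 1, 0⟩, by simp⟩
  have hij := congrArg (·.imJ) (h i hi.1).eq
  have hik := congrArg (·.imK) (h i hi.1).eq
  have hjk := congrArg (·.imK) (h j hj.1).eq
  simp only [imJ_mul, imK_mul, hi, hj] at hij hik hjk
  ext <;> simp only [re_coe, imI_coe, imJ_coe, imK_coe] <;> linarith

theorem mem_unitary_of_norm_eq_one_s3 {q : ℍ} (hq : ‖q‖ = 1) : q ∈ unitary ℍ := by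
  have h : ((normSq q : ℝ) : ℍ) = 1 := by rw [normSq_eq_norm_mul_self, hq, mul_one, coe_one]
  exact Unitary.mem_iff.mpr ⟨by rw [star_mul_self, h], by rw [self_mul_star, h]⟩

theorem normSq_coe_unitary (a : unitary ℍ) : normSq (a : ℍ) = 1 := by
  rw [normSq_eq_norm_mul_self, CStarRing.norm_of_mem_unitary a.2, mul_one]

theorem exists_unitary_mul_self_eq {a : unitary ℍ} (ha : (a : ℍ) ≠ -1) :
    ∃ b : unitary ℍ, b * b = a := by
  set c : ℍ := 1 + a
  have hc : c ≠ 0 := fun h => ha (eq_neg_of_add_eq_zero_right h)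
  refine ⟨⟨‖c‖⁻¹ • c, mem_unitary_of_norm_eq_one_s3 (norm_smul_inv_norm hc)⟩, Subtype.ext ?_⟩
  change (‖c‖⁻¹ • c) * (‖c‖⁻¹ • c) = a
  rw [smul_mul_smul, one_add_mul_one_add_of_normSq_eq_one (normSq_coe_unitary a),
    normSq_eq_norm_mul_self, smul_smul, ← mul_inv, inv_mul_cancel₀ (by positivity), one_smul]

end Quaternion

namespace LinearIsometryEquiv

theorem det_mul {E : Type*} [SeminormedAddCommGroup E] [Module ℝ E] (f g : E ≃ₗᵢ[ℝ] E) :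
    LinearMap.det ((f * g).toLinearEquiv : E →ₗ[ℝ] E) =
      LinearMap.det (f.toLinearEquiv : E →ₗ[ℝ] E) * LinearMap.det (g.toLinearEquiv : E →ₗ[ℝ] E) :=
  LinearMap.det_comp _ _

theorem det_neg {E : Type*} [NormedAddCommGroup E] [NormedSpace ℝ E] [FiniteDimensional ℝ E] :
    LinearMap.det ((neg ℝ : E ≃ₗᵢ[ℝ] E).toLinearEquiv : E →ₗ[ℝ] E) = (-1) ^ finrank ℝ E := by
  have : ((neg ℝ : E ≃ₗᵢ[ℝ] E).toLinearEquiv : E →ₗ[ℝ] E) = (-1 : ℝ) • LinearMap.id := by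
    ext; simp
  rw [this, LinearMap.det_smul, LinearMap.det_id, mul_one]

theorem abs_det {E : Type*} [NormedAddCommGroup E] [InnerProductSpace ℝ E] [FiniteDimensional ℝ E]
    (f : E ≃ₗᵢ[ℝ] E) : |LinearMap.det (f.toLinearEquiv : E →ₗ[ℝ] E)| = 1 := by
  rw [← LinearMap.normDet_eq_abs_det]
  exact f.toLinearIsometry.normDet_eq_one

end LinearIsometryEquiv

theorem imH_eq_ker_re : imH = LinearMap.ker (QuaternionAlgebra.reₗ (-1 : ℝ) 0 (-1)) := rfl

theorem finrank_imH : finrank ℝ imH = 3 := by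
  have := (QuaternionAlgebra.reₗ (-1 : ℝ) 0 (-1)).finrank_range_add_finrank_ker
  have hsurj : LinearMap.range (QuaternionAlgebra.reₗ (-1 : ℝ) 0 (-1)) = ⊤ :=
    LinearMap.range_eq_top.mpr fun r => ⟨r, rfl⟩
  rw [hsurj, finrank_top, finrank_self, ← imH_eq_ker_re, QuaternionAlgebra.finrank_eq_four] at this
  have h : 1 + finrank ℝ imH = 4 := this
  omega

theorem mul_mul_star_mem_imH (a : ℍ) {v : ℍ} (hv : v ∈ imH) : a * v * star a ∈ imH := by
  change (a * v * star a).re = 0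
  rw [re_mul_mul_star, show v.re = 0 from hv, mul_zero]

noncomputable def conjImEquiv (a : unitary ℍ) : imH ≃ₗᵢ[ℝ] imH where
  toFun v := ⟨a * v * star (a : ℍ), mul_mul_star_mem_imH _ v.2⟩
  invFun v := ⟨star (a : ℍ) * v * a, by simpa using mul_mul_star_mem_imH (star (a : ℍ)) v.2⟩
  map_add' u v := Subtype.ext <| by simp [mul_add, add_mul]
  map_smul' c v := Subtype.ext <| by simp
  left_inv v := Subtype.ext <| by simp [mul_assoc, ← mul_assoc (star (a : ℍ))]
  right_inv v := Subtype.ext <| by simp [mul_assoc, ← mul_assoc (a : ℍ)]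
  norm_map' v := by
    change ‖(a : ℍ) * v * star (a : ℍ)‖ = ‖(v : ℍ)‖
    simp [CStarRing.norm_of_mem_unitary a.2]

noncomputable def conjIm : unitary ℍ →* (imH ≃ₗᵢ[ℝ] imH) where
  toFun := conjImEquiv
  map_one' := LinearIsometryEquiv.ext fun v => Subtype.ext <| by simp [conjImEquiv]
  map_mul' a b := LinearIsometryEquiv.ext fun v => Subtype.ext <| by simp [conjImEquiv, mul_assoc]

@[simp]
theorem coe_conjIm_apply (a : unitary ℍ) (v : imH) :
    (conjIm a v : ℍ) = a * v * star (a : ℍ) := rfl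

theorem commute_of_conjIm_apply_eq {a : unitary ℍ} {v : imH} (h : conjIm a v = v) :
    Commute (a : ℍ) v :=
  calc (a : ℍ) * v = a * v * star (a : ℍ) * a := by simp [mul_assoc]
    _ = v * a := by rw [← coe_conjIm_apply, h]

theorem conjIm_eq_one_iff (a : unitary ℍ) : conjIm a = 1 ↔ (a : ℍ) = 1 ∨ (a : ℍ) = -1 := by
  constructor
  · intro h
    have hre : (a : ℍ) = (a : ℍ).re := eq_coe_re_of_forall_commute fun v hv =>
      commute_of_conjIm_apply_eq (v := ⟨v, hv⟩) (by rw [h]; rfl)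
    have hsq : (a : ℍ).re ^ 2 = 1 := by rw [← normSq_coe, ← hre, normSq_coe_unitary]
    rcases sq_eq_one_iff.mp hsq with h1 | h1
    · exact .inl (by rw [hre, h1, coe_one])
    · exact .inr (by rw [hre, h1, coe_neg, coe_one])
  · rintro (h | h) <;> exact LinearIsometryEquiv.ext fun v => Subtype.ext <| by simp [h]

theorem det_conjIm (a : unitary ℍ) :
    LinearMap.det ((conjIm a).toLinearEquiv : imH →ₗ[ℝ] imH) = 1 := by
  by_cases ha : (a : ℍ) = -1
  · rw [(conjIm_eq_one_iff a).mpr (.inr ha)]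
    exact LinearMap.det_id
  obtain ⟨b, rfl⟩ := exists_unitary_mul_self_eq ha
  have habs := (conjIm (b * b)).abs_det
  rw [map_mul, LinearIsometryEquiv.det_mul, ← sq] at habs ⊢
  rwa [abs_sq] at habs

theorem reflection_orthogonal_singleton_eq_neg_mul_conjIm {u : imH} (hu : ‖u‖ = 1) :
    (ℝ ∙ u)ᗮ.reflection =
      LinearIsometryEquiv.neg ℝ * conjIm ⟨u, mem_unitary_of_norm_eq_one_s3 hu⟩ := by
  have hstar : star (u : ℍ) = -u := star_eq_neg.mpr u.2
  have hnormSq : normSq (u : ℍ) = 1 := by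
    rw [normSq_eq_norm_mul_self, ← Submodule.coe_norm, hu, mul_one]
  refine LinearIsometryEquiv.ext fun v => Subtype.ext ?_
  rw [Submodule.reflection_orthogonal_apply, Submodule.reflection_singleton_apply, hu]
  simp only [Submodule.coe_inner, Real.ringHom_apply, one_pow, div_one, neg_sub,
    AddSubgroupClass.coe_sub, SetLike.val_smul_of_tower, nsmul_eq_mul,
    Nat.cast_ofNat, Algebra.mul_smul_comm, two_mul, smul_add, LinearIsometryEquiv.coe_mul,
    LinearIsometryEquiv.coe_neg, Function.comp_apply, NegMemClass.coe_neg, coe_conjIm_apply, hstar,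
    mul_neg, mul_mul_self_of_re_eq_zero u.2 v.2, hnormSq, one_smul, sub_right_inj]
  module

theorem exists_reflection_eq_conjIm_or_neg_mul (v : imH) :
    ∃ a, (ℝ ∙ v)ᗮ.reflection = conjIm a ∨
      (ℝ ∙ v)ᗮ.reflection = LinearIsometryEquiv.neg ℝ * conjIm a := by
  by_cases hv : v = 0
  · refine ⟨1, .inl <| LinearIsometryEquiv.ext fun w => ?_⟩
    simp only [hv, Submodule.span_zero_singleton, Submodule.bot_orthogonal_eq_top, map_one]
    exact (Submodule.reflection_eq_self_iff w).mpr Submodule.mem_top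
  have hu : ‖‖v‖⁻¹ • v‖ = 1 := norm_smul_inv_norm hv
  refine ⟨⟨_, mem_unitary_of_norm_eq_one_s3 hu⟩, .inr ?_⟩
  simp only [← Submodule.span_singleton_smul_eq (inv_ne_zero (norm_ne_zero_iff.mpr hv)).isUnit v]
  exact reflection_orthogonal_singleton_eq_neg_mul_conjIm hu

theorem exists_eq_conjIm_or_eq_neg_mul_conjIm (f : imH ≃ₗᵢ[ℝ] imH) :
    ∃ a, f = conjIm a ∨ f = LinearIsometryEquiv.neg ℝ * conjIm a := by
  have neg_comm (g : imH ≃ₗᵢ[ℝ] imH) : g * .neg ℝ = .neg ℝ * g :=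
    LinearIsometryEquiv.ext fun v => map_neg g v
  have neg_mul_neg : (LinearIsometryEquiv.neg ℝ : imH ≃ₗᵢ[ℝ] imH) * .neg ℝ = 1 :=
    LinearIsometryEquiv.ext fun v => neg_neg v
  obtain ⟨l, -, rfl⟩ := f.reflections_generate_dim
  refine List.prod_induction (fun g => ∃ a, g = conjIm a ∨ g = .neg ℝ * conjIm a) ?_
    ⟨1, .inl (map_one conjIm).symm⟩ ?_
  · rintro _ _ ⟨a, rfl | rfl⟩ ⟨b, rfl | rfl⟩ <;> refine ⟨a * b, ?_⟩ <;> rw [map_mul]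
    · exact .inl rfl
    · rw [← mul_assoc, neg_comm, mul_assoc]
      exact .inr rfl
    · rw [mul_assoc]
      exact .inr rfl
    · rw [mul_assoc, ← mul_assoc (conjIm a), neg_comm, ← mul_assoc, ← mul_assoc, neg_mul_neg,
        one_mul]
      exact .inl rfl
  · intro g hg
    obtain ⟨v, -, rfl⟩ := List.mem_map.mp hg
    exact exists_reflection_eq_conjIm_or_neg_mul v

theorem exists_conjIm_eq_of_det_eq_one {f : imH ≃ₗᵢ[ℝ] imH}
    (hf : LinearMap.det (f.toLinearEquiv : imH →ₗ[ℝ] imH) = 1) : ∃ a, conjIm a = f := by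
  obtain ⟨a, rfl | rfl⟩ := exists_eq_conjIm_or_eq_neg_mul_conjIm f
  · exact ⟨a, rfl⟩
  · rw [LinearIsometryEquiv.det_mul, LinearIsometryEquiv.det_neg, finrank_imH, det_conjIm] at hf
    norm_num at hf

/-- For a unit quaternion `a`, the conjugation `v ↦ a v a⁻¹` restricts to a linear isometry of
`im ℍ`; `a ↦ ρ(a)` is a group homomorphism from the unit quaternions whose kernel is `{1, -1}`
and whose image is exactly the linear isometries of `im ℍ` of determinant `1`. -/
theorem quaternion_conjAct_im :
    ∃ ρ : unitary ℍ →* (imH ≃ₗᵢ[ℝ] imH),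
      (∀ (a : unitary ℍ) (v : imH), (ρ a v : ℍ) = (a : ℍ) * (v : ℍ) * (a : ℍ)⁻¹) ∧
      (∀ a : unitary ℍ, ρ a = 1 ↔ (a : ℍ) = 1 ∨ (a : ℍ) = -1) ∧
      (∀ f : imH ≃ₗᵢ[ℝ] imH,
        (∃ a, ρ a = f) ↔ LinearMap.det (f.toLinearEquiv : imH →ₗ[ℝ] imH) = 1) := by
  refine ⟨conjIm, fun a v => ?_, conjIm_eq_one_iff, fun f => ⟨?_, exists_conjIm_eq_of_det_eq_one⟩⟩
  · rw [coe_conjIm_apply, inv_eq_of_mul_eq_one_right (Unitary.coe_mul_star_self a),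
      Unitary.coe_star]
  · rintro ⟨a, rfl⟩
    exact det_conjIm a
end

section
/- For all purely imaginary quaternions h₁, h₂ the following identities hold in the exterior algebra of ℍ: Λ⁺(h₁) ∧ Λ⁺(h₂) = 8⟨h₁,h₂⟩ω, Λ⁻(h₁) ∧ Λ⁻(h₂) = −8⟨h₁,h₂⟩ω, and Λ⁺(h₁) ∧ Λ⁻(h₂) = 0. -/
/-!
Writing a purely imaginary `h = a i + b j + c k`, a direct computation gives
`Λ^±(h) = 2 (a σ^±₁ + b σ^±₂ + c σ^±₃)` with `σ^ε₁ = 1∧i + ε j∧k`, `σ^ε₂ = 1∧j + ε k∧i`,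
`σ^ε₃ = 1∧k + ε i∧j`. Two different `σ`'s always share a factor, so their wedge vanishes, while
decomposable 2-vectors commute and square to zero, so `σ^ε_a ∧ σ^δ_a = (ε + δ) ω`. By bilinearity
`Λ^ε(h₁) ∧ Λ^δ(h₂) = 4 (ε + δ) ⟨h₁, h₂⟩ ω`, which is the claim for `ε, δ = ±1`.
-/

open Quaternion

namespace QuaternionExterior

/-- The quaternion `i`. -/
def qI : ℍ := ⟨0, 1, 0, 0⟩
/-- The quaternion `j`. -/
def qJ : ℍ := ⟨0, 0, 1, 0⟩
/-- The quaternion `k`. -/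
def qK : ℍ := ⟨0, 0, 0, 1⟩

open ExteriorAlgebra

/-- `Λ⁺(h) = 1∧h + i∧(hi) + j∧(hj) + k∧(hk)` in the exterior algebra of `ℍ`. -/
noncomputable def Lplus (h : ℍ) : ExteriorAlgebra ℝ ℍ :=
  ι ℝ (1 : ℍ) * ι ℝ h + ι ℝ qI * ι ℝ (h * qI) + ι ℝ qJ * ι ℝ (h * qJ) + ι ℝ qK * ι ℝ (h * qK)

/-- `Λ⁻(h) = 1∧h + i∧(ih) + j∧(jh) + k∧(kh)` in the exterior algebra of `ℍ`. -/
noncomputable def Lminus (h : ℍ) : ExteriorAlgebra ℝ ℍ :=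
  ι ℝ (1 : ℍ) * ι ℝ h + ι ℝ qI * ι ℝ (qI * h) + ι ℝ qJ * ι ℝ (qJ * h) + ι ℝ qK * ι ℝ (qK * h)

/-- `ω = 1∧i∧j∧k`. -/
noncomputable def ω : ExteriorAlgebra ℝ ℍ := ι ℝ (1 : ℍ) * ι ℝ qI * ι ℝ qJ * ι ℝ qK

end QuaternionExterior

theorem add_smul_mul_add_smul_of_mul_self_eq_zero {R A : Type*} [CommSemiring R] [Semiring A]
    [Algebra R A] {α β : A} (hα : α * α = 0) (hβ : β * β = 0) (hαβ : Commute α β) (ε δ : R) :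
    (α + ε • β) * (α + δ • β) = (ε + δ) • (α * β) := by
  simp only [add_mul, mul_add, smul_mul_assoc, mul_smul_comm, hα, hβ, ← hαβ.eq, smul_zero]
  module

namespace ExteriorAlgebra

variable {R M : Type*} [CommRing R] [AddCommGroup M] [Module R M]

theorem ι_mul_ι_comm (u v : M) : ι R u * ι R v = -(ι R v * ι R u) :=
  eq_neg_of_add_eq_zero_left (ι_add_mul_swap u v)

theorem ι_mul_ι_mul_comm (u v : M) (x : ExteriorAlgebra R M) :
    ι R u * (ι R v * x) = -(ι R v * (ι R u * x)) := by
  rw [← mul_assoc, ι_mul_ι_comm, neg_mul, mul_assoc]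

theorem ι_mul_ι_commute_ι_mul_ι (u v w x : M) :
    Commute (ι R u * ι R v) (ι R w * ι R x) := by
  simp only [Commute, SemiconjBy, mul_assoc, ι_mul_ι_mul_comm v w, ι_mul_ι_mul_comm u w,
    ι_mul_ι_comm v x, ι_mul_ι_mul_comm u x, mul_neg, neg_neg]

@[simp]
theorem ι_mul_ι_mul_ι_mul_ι_left_left (u v w : M) : ι R u * ι R v * (ι R u * ι R w) = 0 := by
  rw [mul_assoc, ι_mul_ι_mul_comm v, mul_neg, ← mul_assoc, ι_sq_zero, zero_mul, neg_zero]

@[simp]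
theorem ι_mul_ι_mul_ι_mul_ι_left_right (u v w : M) : ι R u * ι R v * (ι R w * ι R u) = 0 := by
  rw [ι_mul_ι_comm w, mul_neg, ι_mul_ι_mul_ι_mul_ι_left_left, neg_zero]

@[simp]
theorem ι_mul_ι_mul_ι_mul_ι_right_left (u v w : M) : ι R u * ι R v * (ι R v * ι R w) = 0 := by
  rw [ι_mul_ι_comm u, neg_mul, ι_mul_ι_mul_ι_mul_ι_left_left, neg_zero]

@[simp]
theorem ι_mul_ι_mul_ι_mul_ι_right_right (u v w : M) : ι R u * ι R v * (ι R w * ι R v) = 0 := by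
  rw [ι_mul_ι_comm u, neg_mul, ι_mul_ι_mul_ι_mul_ι_left_right, neg_zero]

theorem ι_mul_ι_mul_ι_mul_ι_cycle (u v w x : M) :
    ι R u * ι R w * (ι R x * ι R v) = ι R u * ι R v * ι R w * ι R x := by
  simp only [mul_assoc, ι_mul_ι_comm x v, ι_mul_ι_mul_comm w v, mul_neg, neg_neg]

variable (e₀ e₁ e₂ e₃ : M)

/-- For `ε = ±1`, the `ε`-eigenvectors of the Hodge star on 2-vectors for the volume element
`ι e₀ * ι e₁ * ι e₂ * ι e₃`. The second summands run over the cyclic shifts of `(1, 2, 3)`, so that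
`e₀ ∧ eₐ ∧ e_b ∧ e_c` is the volume element itself in each case. -/
def hodgeEigenform (ε : R) : Fin 3 → ExteriorAlgebra R M :=
  ![ι R e₀ * ι R e₁ + ε • (ι R e₂ * ι R e₃), ι R e₀ * ι R e₂ + ε • (ι R e₃ * ι R e₁),
    ι R e₀ * ι R e₃ + ε • (ι R e₁ * ι R e₂)]

theorem hodgeEigenform_mul_self (ε δ : R) (i : Fin 3) :
    hodgeEigenform e₀ e₁ e₂ e₃ ε i * hodgeEigenform e₀ e₁ e₂ e₃ δ i =
      (ε + δ) • (ι R e₀ * ι R e₁ * ι R e₂ * ι R e₃) := by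
  fin_cases i <;>
    simp only [hodgeEigenform, Fin.zero_eta, Fin.mk_one, Fin.reduceFinMk, Matrix.cons_val,
      add_smul_mul_add_smul_of_mul_self_eq_zero (by simp) (by simp) (ι_mul_ι_commute_ι_mul_ι ..)]
  · rw [← mul_assoc]
  · rw [ι_mul_ι_mul_ι_mul_ι_cycle]
  · rw [ι_mul_ι_mul_ι_mul_ι_cycle, mul_assoc _ (ι R e₃), ι_mul_ι_mul_ι_mul_ι_cycle]

theorem hodgeEigenform_mul_of_ne (ε δ : R) {i j : Fin 3} (hij : i ≠ j) :
    hodgeEigenform e₀ e₁ e₂ e₃ ε i * hodgeEigenform e₀ e₁ e₂ e₃ δ j = 0 := by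
  fin_cases i <;> fin_cases j <;> simp [hodgeEigenform, add_mul, mul_add] at hij ⊢

theorem hodgeEigenform_mul (ε δ : R) (i j : Fin 3) :
    hodgeEigenform e₀ e₁ e₂ e₃ ε i * hodgeEigenform e₀ e₁ e₂ e₃ δ j =
      if i = j then (ε + δ) • (ι R e₀ * ι R e₁ * ι R e₂ * ι R e₃) else 0 := by
  split_ifs with hij
  · rw [hij, hodgeEigenform_mul_self]
  · exact hodgeEigenform_mul_of_ne e₀ e₁ e₂ e₃ ε δ hij

theorem sum_smul_hodgeEigenform_mul_sum_smul (ε δ : R) (x y : Fin 3 → R) :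
    (∑ i, x i • hodgeEigenform e₀ e₁ e₂ e₃ ε i) * (∑ j, y j • hodgeEigenform e₀ e₁ e₂ e₃ δ j) =
      ((ε + δ) * ∑ i, x i * y i) • (ι R e₀ * ι R e₁ * ι R e₂ * ι R e₃) := by
  rw [Finset.sum_mul_sum]
  simp only [smul_mul_smul_comm, hodgeEigenform_mul, smul_ite, smul_zero, Finset.sum_ite_eq,
    Finset.mem_univ, if_true, smul_smul, Finset.mul_sum, Finset.sum_smul]
  exact Finset.sum_congr rfl fun i _ => by rw [mul_comm]

end ExteriorAlgebra

namespace QuaternionExterior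

open ExteriorAlgebra

theorem qI_mul_qI : qI * qI = -1 := by ext <;> simp <;> simp [qI]
theorem qI_mul_qJ : qI * qJ = qK := by ext <;> simp <;> simp [qI, qJ, qK]
theorem qI_mul_qK : qI * qK = -qJ := by ext <;> simp <;> simp [qI, qJ, qK]
theorem qJ_mul_qI : qJ * qI = -qK := by ext <;> simp <;> simp [qI, qJ, qK]
theorem qJ_mul_qJ : qJ * qJ = -1 := by ext <;> simp <;> simp [qJ]
theorem qJ_mul_qK : qJ * qK = qI := by ext <;> simp <;> simp [qI, qJ, qK]
theorem qK_mul_qI : qK * qI = qJ := by ext <;> simp <;> simp [qI, qJ, qK]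
theorem qK_mul_qJ : qK * qJ = -qI := by ext <;> simp <;> simp [qI, qJ, qK]
theorem qK_mul_qK : qK * qK = -1 := by ext <;> simp <;> simp [qK]

theorem Lplus_add (u v : ℍ) : Lplus (u + v) = Lplus u + Lplus v := by
  simp only [Lplus, add_mul, map_add, mul_add]
  abel

theorem Lplus_smul (r : ℝ) (u : ℍ) : Lplus (r • u) = r • Lplus u := by
  simp only [Lplus, smul_mul_assoc, map_smul, mul_smul_comm, smul_add]

theorem Lminus_add (u v : ℍ) : Lminus (u + v) = Lminus u + Lminus v := by
  simp only [Lminus, mul_add, map_add]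
  abel

theorem Lminus_smul (r : ℝ) (u : ℍ) : Lminus (r • u) = r • Lminus u := by
  simp only [Lminus, mul_smul_comm, map_smul, smul_add]

def imBasis : Fin 3 → ℍ := ![qI, qJ, qK]

def imCoords (h : ℍ) : Fin 3 → ℝ := ![h.imI, h.imJ, h.imK]

theorem eq_sum_imCoords_smul_imBasis {h : ℍ} (h0 : h.re = 0) :
    h = ∑ i, imCoords h i • imBasis i := by
  ext <;> simp [Fin.sum_univ_three, imCoords, imBasis] <;> simp [qI, qJ, qK, h0]

theorem Lplus_imBasis (i : Fin 3) :
    Lplus (imBasis i) = (2 : ℝ) • hodgeEigenform 1 qI qJ qK (1 : ℝ) i := by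
  fin_cases i <;>
    simp only [Lplus, imBasis, hodgeEigenform, Fin.zero_eta, Fin.mk_one, Fin.reduceFinMk,
      Matrix.cons_val, qI_mul_qI, qI_mul_qJ, qI_mul_qK, qJ_mul_qI, qJ_mul_qJ, qJ_mul_qK,
      qK_mul_qI, qK_mul_qJ, qK_mul_qK, ι_mul_ι_comm qI 1, ι_mul_ι_comm qJ 1, ι_mul_ι_comm qK 1,
      ι_mul_ι_comm qK qJ, ι_mul_ι_comm qI qK, ι_mul_ι_comm qJ qI, map_neg, mul_neg, neg_neg] <;>
    module

theorem Lminus_imBasis (i : Fin 3) :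
    Lminus (imBasis i) = (2 : ℝ) • hodgeEigenform 1 qI qJ qK (-1 : ℝ) i := by
  fin_cases i <;>
    simp only [Lminus, imBasis, hodgeEigenform, Fin.zero_eta, Fin.mk_one, Fin.reduceFinMk,
      Matrix.cons_val, qI_mul_qI, qI_mul_qJ, qI_mul_qK, qJ_mul_qI, qJ_mul_qJ, qJ_mul_qK,
      qK_mul_qI, qK_mul_qJ, qK_mul_qK, ι_mul_ι_comm qI 1, ι_mul_ι_comm qJ 1, ι_mul_ι_comm qK 1,
      ι_mul_ι_comm qK qJ, ι_mul_ι_comm qI qK, ι_mul_ι_comm qJ qI, map_neg, mul_neg, neg_neg] <;>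
    module

theorem Lplus_of_re_eq_zero {h : ℍ} (h0 : h.re = 0) :
    Lplus h = (2 : ℝ) • ∑ i, imCoords h i • hodgeEigenform 1 qI qJ qK (1 : ℝ) i := by
  conv_lhs => rw [eq_sum_imCoords_smul_imBasis h0]
  simp only [Fin.sum_univ_three, Lplus_add, Lplus_smul, Lplus_imBasis]
  module

theorem Lminus_of_re_eq_zero {h : ℍ} (h0 : h.re = 0) :
    Lminus h = (2 : ℝ) • ∑ i, imCoords h i • hodgeEigenform 1 qI qJ qK (-1 : ℝ) i := by
  conv_lhs => rw [eq_sum_imCoords_smul_imBasis h0]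
  simp only [Fin.sum_univ_three, Lminus_add, Lminus_smul, Lminus_imBasis]
  module

theorem inner_eq_sum_imCoords {h₁ h₂ : ℍ} (h1 : h₁.re = 0) (h2 : h₂.re = 0) :
    inner ℝ h₁ h₂ = ∑ i, imCoords h₁ i * imCoords h₂ i := by
  simp [Quaternion.inner_def, h1, h2, imCoords, Fin.sum_univ_three]

/-- For purely imaginary quaternions `h₁, h₂`:
`Λ⁺(h₁) ∧ Λ⁺(h₂) = 8⟨h₁,h₂⟩ω`, `Λ⁻(h₁) ∧ Λ⁻(h₂) = -8⟨h₁,h₂⟩ω` and `Λ⁺(h₁) ∧ Λ⁻(h₂) = 0`. -/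
theorem lambda_wedge (h₁ h₂ : ℍ) (h1 : h₁.re = 0) (h2 : h₂.re = 0) :
    Lplus h₁ * Lplus h₂ = (8 * (inner ℝ h₁ h₂ : ℝ)) • ω ∧
    Lminus h₁ * Lminus h₂ = (-(8 * (inner ℝ h₁ h₂ : ℝ))) • ω ∧
    Lplus h₁ * Lminus h₂ = 0 := by
  simp only [Lplus_of_re_eq_zero h1, Lplus_of_re_eq_zero h2, Lminus_of_re_eq_zero h1,
    Lminus_of_re_eq_zero h2, smul_mul_smul_comm, sum_smul_hodgeEigenform_mul_sum_smul,
    ← inner_eq_sum_imCoords h1 h2, smul_smul, ω]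
  norm_num [← mul_assoc]

end QuaternionExterior
end

section
/- An ℝ-linear isometric automorphism f of ℍⁿ belongs to TSp(ℍⁿ) if and only if there exist a unit quaternion a and g ∈ Sp(ℍⁿ) such that f(v) = a • g(v) for all v ∈ ℍⁿ. -/
/-!
Every `ℝ`-algebra automorphism `κ` of `ℍ` is inner (Skolem–Noether). Averaging `x ↦ κ(e) x ē`
over `e ∈ {1, i, j, k}` gives `T x = x - κ(i) x i - κ(j) x j - κ(k) x k`, which satisfies
`κ(e) · T x = T x · e`, and `T` does not vanish on all of `1, i, j, k` because `Σₑ T(e) ē = 4`.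
Normalising a nonzero value of `T` gives a unit quaternion `u` with `κ r = u r ū`, so `g := ū • f`
is `ℍ`-linear and `f = u • g`. Conversely, `f = a • g` is twisted by conjugation with `a`.
-/

open Quaternion

/-- `ℍⁿ`, the orthogonal direct sum of `n` copies of `ℍ`, as a real inner product space
and left `ℍ`-module. -/
abbrev Hn (n : ℕ) := PiLp 2 (fun _ : Fin n => ℍ)

namespace QuaternionAlgebra.Basis

variable {R A : Type*} [CommRing R] [Ring A] [Algebra R A] (p q : Basis A (-1 : R) 0 (-1))

def intertwiner (x : A) : A :=
  x - p.i * x * q.i - p.j * x * q.j - p.k * x * q.k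

lemma i_mul_intertwiner (x : A) : p.i * p.intertwiner q x = p.intertwiner q x * q.i := by
  simp only [intertwiner, mul_sub, sub_mul, mul_assoc, q.i_mul_i, q.k_mul_i, q.j_mul_i]
  simp only [← mul_assoc p.i p.i, ← mul_assoc p.i p.j, ← mul_assoc p.i p.k, p.i_mul_i, p.i_mul_j,
    p.i_mul_k]
  simp
  abel

lemma j_mul_intertwiner (x : A) : p.j * p.intertwiner q x = p.intertwiner q x * q.j := by
  simp only [intertwiner, mul_sub, sub_mul, mul_assoc, q.i_mul_j, q.k_mul_j, q.j_mul_j]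
  simp only [← mul_assoc p.j p.i, ← mul_assoc p.j p.j, ← mul_assoc p.j p.k, p.j_mul_i, p.j_mul_j,
    p.j_mul_k]
  simp
  abel

lemma intertwiner_sub_intertwiner_mul_eq_four :
    p.intertwiner q 1 - p.intertwiner q q.i * q.i - p.intertwiner q q.j * q.j
      - p.intertwiner q q.k * q.k = 4 := by
  simp only [intertwiner, sub_mul, mul_assoc, mul_one]
  simp [q.i_mul_i, q.j_mul_j, q.k_mul_k, q.i_mul_j, q.j_mul_i, q.i_mul_k, q.k_mul_i, q.j_mul_k,
    q.k_mul_j]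
  abel_nf
  norm_num

lemma exists_intertwiner_ne_zero (h4 : (4 : A) ≠ 0) : ∃ x, p.intertwiner q x ≠ 0 := by
  by_contra! h
  apply h4
  simp [← p.intertwiner_sub_intertwiner_mul_eq_four q, h]

end QuaternionAlgebra.Basis

namespace Quaternion

open QuaternionAlgebra (Basis)

theorem exists_ne_zero_forall_mul_eq_mul {R D : Type*} [CommRing R] [DivisionRing D]
    [Algebra R D] (h4 : (4 : D) ≠ 0) (f g : ℍ[R] →ₐ[R] D) :
    ∃ a : D, a ≠ 0 ∧ ∀ x, f x * a = a * g x := by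
  set p := (Basis.self R).compHom f
  set q := (Basis.self R).compHom g
  obtain ⟨y, hy⟩ := p.exists_intertwiner_ne_zero q h4
  set a := p.intertwiner q y
  let conj : D ≃ₐ[R] D := MulSemiringAction.toAlgEquiv R D (ConjAct.toConjAct (Units.mk0 a hy))
  have hconj : ∀ z, conj z * a = a * z := fun z => by
    simp [conj, ConjAct.units_smul_def, hy]
  have hf : f = conj.toAlgHom.comp g :=
    hom_ext (mul_right_cancel₀ hy <| (p.i_mul_intertwiner q y).trans (hconj _).symm)
      (mul_right_cancel₀ hy <| (p.j_mul_intertwiner q y).trans (hconj _).symm)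
  exact ⟨a, hy, fun x => hf ▸ hconj (g x)⟩

theorem exists_mem_unitary_eq_mul_mul_star (κ : ℍ →ₐ[ℝ] ℍ) :
    ∃ u ∈ unitary ℍ, ∀ r, κ r = u * r * star u := by
  obtain ⟨a, ha, h⟩ := exists_ne_zero_forall_mul_eq_mul (D := ℍ)
    (fun h => four_ne_zero (congrArg QuaternionAlgebra.re h : (4 : ℝ) = 0)) κ (AlgHom.id ℝ ℍ)
  set u : ℍ := (‖a‖⁻¹ : ℝ) • a
  have hu1 : ‖u‖ = 1 := by
    rw [norm_smul, norm_inv, norm_norm, inv_mul_cancel₀ (norm_ne_zero_iff.2 ha)]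
  have hu : u ∈ unitary ℍ := by
    rw [Unitary.mem_iff, star_mul_self, self_mul_star, normSq_eq_norm_mul_self, hu1]
    simp
  refine ⟨u, hu, fun r => ?_⟩
  calc κ r = κ r * u * star u := by rw [mul_assoc, Unitary.mul_star_self_of_mem hu, mul_one]
    _ = u * r * star u := by rw [mul_smul_comm, h, AlgHom.id_apply, ← smul_mul_assoc]

end Quaternion

namespace Unitary

variable (R : Type*) {A E : Type*} [Ring R] [NormedRing A] [StarRing A] [CStarRing A]
  [Nontrivial A] [SeminormedAddCommGroup E] [Module R E] [Module A E] [NormSMulClass A E]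
  [SMulCommClass A R E]

noncomputable def smulLeft (u : unitary A) : E ≃ₗᵢ[R] E where
  toLinearEquiv := DistribMulAction.toLinearEquiv R E (toUnits u)
  norm_map' v := by
    change ‖(u : A) • v‖ = ‖v‖
    rw [norm_smul, CStarRing.norm_coe_unitary, one_mul]

@[simp] lemma smulLeft_apply (u : unitary A) (v : E) : smulLeft R u v = (u : A) • v := rfl

end Unitary

/-- An ℝ-linear isometric automorphism `f` of `ℍⁿ` lies in `TSp(ℍⁿ)` (i.e. is twisted
`ℍ`-linear for some automorphism of `ℍ`) iff `f = a • g` for some unit quaternion `a`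
and some `ℍ`-linear isometry `g ∈ Sp(ℍⁿ)`. -/
theorem mem_TSp_iff (n : ℕ) (f : Hn n ≃ₗᵢ[ℝ] Hn n) :
    (∃ κ : ℍ ≃ₐ[ℝ] ℍ, ∀ (r : ℍ) (v : Hn n), f (r • v) = κ r • f v) ↔
    ∃ (a : ℍ) (g : Hn n ≃ₗᵢ[ℝ] Hn n),
      (a * star a).re = 1 ∧ (∀ (r : ℍ) (v : Hn n), g (r • v) = r • g v) ∧
      ∀ v : Hn n, f v = a • g v := by
  constructor
  · rintro ⟨κ, hκ⟩
    obtain ⟨u, hu, hκu⟩ := exists_mem_unitary_eq_mul_mul_star κ.toAlgHom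
    refine ⟨u, f.trans (Unitary.smulLeft ℝ (star ⟨u, hu⟩)),
      by simp [Unitary.mul_star_self_of_mem hu], fun r v => ?_, fun v => ?_⟩
    · have hκr : κ r = u * r * star u := hκu r
      simp [hκ, hκr, smul_smul, ← mul_assoc, Unitary.star_mul_self_of_mem hu]
    · simp [smul_smul, Unitary.mul_star_self_of_mem hu]
  · rintro ⟨a, g, ha, hg, hfg⟩
    have ha0 : a ≠ 0 := by rintro rfl; simp at ha
    refine ⟨MulSemiringAction.toAlgEquiv ℝ ℍ (ConjAct.toConjAct (Units.mk0 a ha0)), fun r v => ?_⟩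
    simp [hfg, hg, ConjAct.units_smul_def, smul_smul, mul_assoc, ha0]
end

section
/- An ℝ-linear isometric automorphism f of ℍⁿ belongs to TSp(ℍⁿ) ∩ TU(ℍⁿ) if and only if there exist a unit quaternion a lying in ℂ ∪ ℂj (equivalently, a i a⁻¹ = ±i) and g ∈ Sp(ℍⁿ) such that f(v) = a • g(v) for all v ∈ ℍⁿ; in other words, TSp(ℍⁿ) ∩ TU(ℍⁿ) = TU(1)·Sp(ℍⁿ). -/
open Quaternion

/-- The embedding of `ℂ = ℝ ⊕ ℝi` into `ℍ`. -/
def cq (z : ℂ) : ℍ := ⟨z.re, z.im, 0, 0⟩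

/-!
If `f (r • v) = κ r • f v` on a nonzero `ℍ`-module, then `κ` is determined by `f`, so the `TU`
condition forces `κ i = ± i`. Hence `κ j` anticommutes with `i` and squares to `-1`, i.e.
`κ j = w j` with `w ∈ ℂ`, `|w| = 1`. For `s² = w`, conjugation by `s` (if `κ i = i`) or by `s j`
(if `κ i = -i`) agrees with `κ` on the generators `i, j`, so `κ` is conjugation by a unit
`a ∈ ℂ ∪ ℂj`, and `a⁻¹ f` is `ℍ`-linear. Conversely, `a ∈ ℂ` commutes with `ℂ`, and `a ∈ ℂj`
satisfies `a z = z̄ a`.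
-/

open ComplexConjugate

def qj : ℍ := (QuaternionAlgebra.Basis.self ℝ).j

@[simp] lemma cq_re (z : ℂ) : (cq z).re = z.re := rfl
@[simp] lemma cq_imI (z : ℂ) : (cq z).imI = z.im := rfl
@[simp] lemma cq_imJ (z : ℂ) : (cq z).imJ = 0 := rfl
@[simp] lemma cq_imK (z : ℂ) : (cq z).imK = 0 := rfl
@[simp] lemma qj_re : qj.re = 0 := rfl
@[simp] lemma qj_imI : qj.imI = 0 := rfl
@[simp] lemma qj_imJ : qj.imJ = 1 := rfl
@[simp] lemma qj_imK : qj.imK = 0 := rfl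

lemma cq_mul (z w : ℂ) : cq (z * w) = cq z * cq w := by ext <;> simp

lemma cq_neg (z : ℂ) : cq (-z) = -cq z := by ext <;> simp

lemma star_cq (z : ℂ) : star (cq z) = cq (conj z) := by ext <;> simp

lemma qj_mul_cq (z : ℂ) : qj * cq z = cq (conj z) * qj := by ext <;> simp

lemma qj_mul_qj : qj * qj = -1 := by ext <;> simp

lemma normSq_cq (z : ℂ) : normSq (cq z) = Complex.normSq z := by
  simp [normSq_def', Complex.normSq_apply, sq]

lemma normSq_qj : normSq qj = 1 := by simp [normSq_def']

lemma mem_unitary_iff_normSq_eq_one (a : ℍ) : a ∈ unitary ℍ ↔ normSq a = 1 := by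
  rw [Unitary.mem_iff, star_mul_self, self_mul_star, and_self, ← coe_one, coe_inj]

lemma mem_unitary_iff_re_mul_star (a : ℍ) : a ∈ unitary ℍ ↔ (a * star a).re = 1 := by
  rw [mem_unitary_iff_normSq_eq_one, self_mul_star, re_coe]

lemma mul_cq_of_imJ_eq_zero {a : ℍ} (hJ : a.imJ = 0) (hK : a.imK = 0) (z : ℂ) :
    a * cq z = cq z * a := by
  ext <;> simp [hJ, hK] <;> ring

lemma mul_cq_of_re_eq_zero {a : ℍ} (hre : a.re = 0) (hI : a.imI = 0) (z : ℂ) :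
    a * cq z = cq (conj z) * a := by
  ext <;> simp [hre, hI] <;> ring

lemma eq_cq_mul_qj_of_anticomm {q : ℍ} (h : cq Complex.I * q = -(q * cq Complex.I)) :
    q = cq ⟨q.imJ, q.imK⟩ * qj := by
  have hre : -q.imI = q.imI := by simpa using congrArg QuaternionAlgebra.re h
  have hI : q.re = -q.re := by simpa using congrArg QuaternionAlgebra.imI h
  ext <;> simp <;> linarith

lemma normSq_eq_one_of_mul_self_eq_neg_one {q : ℍ} (h : q * q = -1) : normSq q = 1 := by
  have hq2 : normSq q ^ 2 = 1 := by rw [sq, ← map_mul, h, normSq_neg, map_one]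
  exact (pow_eq_one_iff_of_nonneg normSq_nonneg two_ne_zero).1 hq2

noncomputable abbrev innerAut (u : unitary ℍ) : ℍ ≃ₐ[ℝ] ℍ :=
  (Unitary.conjStarAlgAut ℝ ℍ u).toAlgEquiv

lemma innerAut_mul_apply (u₁ u₂ : unitary ℍ) (x : ℍ) :
    innerAut (u₁ * u₂) x = innerAut u₁ (innerAut u₂ x) :=
  Unitary.conjStarAlgAut_mul_apply (S := ℝ) u₁ u₂ x

theorem algEquiv_ext_cq_I_qj {κ₁ κ₂ : ℍ ≃ₐ[ℝ] ℍ} (hi : κ₁ (cq Complex.I) = κ₂ (cq Complex.I))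
    (hj : κ₁ qj = κ₂ qj) : κ₁ = κ₂ :=
  AlgEquiv.coe_toAlgHom_injective (Quaternion.hom_ext hi hj)

def cqUnitary (s : ℂ) (hs : Complex.normSq s = 1) : unitary ℍ :=
  ⟨cq s, by rw [mem_unitary_iff_normSq_eq_one, normSq_cq, hs]⟩

def qjUnitary : unitary ℍ := ⟨qj, by rw [mem_unitary_iff_normSq_eq_one, normSq_qj]⟩

lemma innerAut_cqUnitary_cq_I (s : ℂ) (hs : Complex.normSq s = 1) :
    innerAut (cqUnitary s hs) (cq Complex.I) = cq Complex.I := by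
  change cq s * cq Complex.I * star (cq s) = _
  rw [star_cq, ← cq_mul, ← cq_mul, mul_right_comm, Complex.mul_conj, hs, Complex.ofReal_one,
    one_mul]

lemma innerAut_cqUnitary_qj (s : ℂ) (hs : Complex.normSq s = 1) :
    innerAut (cqUnitary s hs) qj = cq (s ^ 2) * qj := by
  change cq s * qj * star (cq s) = _
  rw [star_cq, mul_assoc, qj_mul_cq, Complex.conj_conj, ← mul_assoc, ← cq_mul, sq]

lemma innerAut_qjUnitary_cq_I : innerAut qjUnitary (cq Complex.I) = -cq Complex.I := by
  change qj * cq Complex.I * star qj = _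
  ext <;> simp

lemma innerAut_qjUnitary_qj : innerAut qjUnitary qj = qj := by
  change qj * qj * star qj = _
  ext <;> simp

lemma cq_I_mul_map_qj {κ : ℍ ≃ₐ[ℝ] ℍ}
    (h : κ (cq Complex.I) = cq Complex.I ∨ κ (cq Complex.I) = -cq Complex.I) :
    cq Complex.I * κ qj = -(κ qj * cq Complex.I) := by
  have hij : cq Complex.I * qj = -(qj * cq Complex.I) := by
    rw [qj_mul_cq, Complex.conj_I, cq_neg, neg_mul, neg_neg]
  have := congrArg κ hij
  rw [map_mul, map_neg, map_mul] at this
  rcases h with h | h <;> rw [h] at this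
  · exact this
  · rwa [neg_mul, mul_neg, neg_inj] at this

theorem exists_innerAut_of_map_cq_I (κ : ℍ ≃ₐ[ℝ] ℍ)
    (h : κ (cq Complex.I) = cq Complex.I ∨ κ (cq Complex.I) = -cq Complex.I) :
    ∃ u : unitary ℍ, (((u : ℍ).imJ = 0 ∧ (u : ℍ).imK = 0) ∨ ((u : ℍ).re = 0 ∧ (u : ℍ).imI = 0)) ∧
      κ = innerAut u := by
  set w : ℂ := ⟨(κ qj).imJ, (κ qj).imK⟩
  have hqw : κ qj = cq w * qj := eq_cq_mul_qj_of_anticomm (cq_I_mul_map_qj h)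
  have hw : Complex.normSq w = 1 := by
    have hq : normSq (κ qj) = 1 := normSq_eq_one_of_mul_self_eq_neg_one <| by
      rw [← map_mul, qj_mul_qj, map_neg, map_one]
    rwa [hqw, map_mul, normSq_cq, normSq_qj, mul_one] at hq
  obtain ⟨s, hs⟩ := IsAlgClosed.exists_pow_nat_eq w two_pos
  have hs1 : Complex.normSq s = 1 := by
    rw [← pow_eq_one_iff_of_nonneg (Complex.normSq_nonneg s) two_ne_zero, ← map_pow, hs, hw]
  have hc_qj : innerAut (cqUnitary s hs1) qj = κ qj := by rw [innerAut_cqUnitary_qj, hs, hqw]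
  rcases h with h | h
  · refine ⟨cqUnitary s hs1, Or.inl ⟨rfl, rfl⟩, algEquiv_ext_cq_I_qj ?_ hc_qj.symm⟩
    rw [h, innerAut_cqUnitary_cq_I]
  · refine ⟨cqUnitary s hs1 * qjUnitary, Or.inr ⟨?_, ?_⟩, algEquiv_ext_cq_I_qj ?_ ?_⟩
    · simp [cqUnitary, qjUnitary]
    · simp [cqUnitary, qjUnitary]
    · rw [h, innerAut_mul_apply, innerAut_qjUnitary_cq_I, map_neg, innerAut_cqUnitary_cq_I]
    · rw [innerAut_mul_apply, innerAut_qjUnitary_qj, hc_qj]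

theorem map_smul_of_eq_smul {M α : Type*} [Monoid M] [MulAction M α] {f g : α → α} {a r s : M}
    (hg : ∀ (r : M) v, g (r • v) = r • g v) (hfg : ∀ v, f v = a • g v) (h : a * r = s * a)
    (v : α) : f (r • v) = s • f v := by
  rw [hfg, hfg, hg, smul_smul, smul_smul, h]

theorem apply_eq_of_map_smul {R M : Type*} [Ring R] [IsCancelMulZero R] [AddCommGroup M]
    [Module R M] [Module.IsTorsionFree R M] [Nontrivial M] {κ : R → R} {f : M → M}
    (hf : Function.Surjective f) (hκ : ∀ (r : R) v, f (r • v) = κ r • f v) {r s : R}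
    (h : ∀ v, f (r • v) = s • f v) : κ r = s := by
  obtain ⟨w, hw⟩ := exists_ne (0 : M)
  obtain ⟨v, rfl⟩ := hf w
  exact smul_left_injective R hw ((hκ r v).symm.trans (h v))

section QuaternionModule

variable {E : Type*} [NormedAddCommGroup E] [Module ℍ E] [NormSMulClass ℍ E] [Module ℝ E]
  [IsScalarTower ℝ ℍ E]

noncomputable def unitarySMul (u : unitary ℍ) : E ≃ₗᵢ[ℝ] E :=
  { DistribMulAction.toLinearEquiv ℝ E (Unitary.toUnits u) with
    norm_map' v := by
      rw [← one_mul ‖v‖, ← CStarRing.norm_coe_unitary u, ← norm_smul]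
      rfl }

@[simp] lemma unitarySMul_apply (u : unitary ℍ) (v : E) : unitarySMul u v = (u : ℍ) • v := rfl

theorem exists_linear_eq_smul_iff (u : unitary ℍ) (f : E ≃ₗᵢ[ℝ] E) :
    (∃ g : E ≃ₗᵢ[ℝ] E, (∀ (r : ℍ) v, g (r • v) = r • g v) ∧ ∀ v, f v = (u : ℍ) • g v) ↔
      ∀ (r : ℍ) v, f (r • v) = innerAut u r • f v := by
  have hu : ∀ r, (u : ℍ) * r = innerAut u r * u := fun r => by
    simp [mul_assoc]
  refine ⟨fun ⟨g, hg, hfg⟩ r v => map_smul_of_eq_smul hg hfg (hu r) v, fun hf => ?_⟩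
  refine ⟨f.trans (unitarySMul (star u)), fun r v => ?_, fun v => ?_⟩
  · simp only [LinearIsometryEquiv.trans_apply, unitarySMul_apply, hf, smul_smul]
    simp [← mul_assoc]
  · simp [smul_smul]

end QuaternionModule

/-- An ℝ-linear isometric automorphism `f` of `ℍⁿ` lies in `TSp(ℍⁿ) ∩ TU(ℍⁿ)` iff
`f = a • g` for some unit quaternion `a ∈ ℂ ∪ ℂj` and some `g ∈ Sp(ℍⁿ)`;
that is, `TSp(ℍⁿ) ∩ TU(ℍⁿ) = TU(1)·Sp(ℍⁿ)`. -/
theorem mem_TSp_inter_TU_iff (n : ℕ) (f : Hn n ≃ₗᵢ[ℝ] Hn n) :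
    ((∃ κ : ℍ ≃ₐ[ℝ] ℍ, ∀ (r : ℍ) (v : Hn n), f (r • v) = κ r • f v) ∧
      ((∀ (z : ℂ) (v : Hn n), f (cq z • v) = cq z • f v) ∨
        (∀ (z : ℂ) (v : Hn n), f (cq z • v) = cq (starRingEnd ℂ z) • f v))) ↔
    ∃ (a : ℍ) (g : Hn n ≃ₗᵢ[ℝ] Hn n),
      (a * star a).re = 1 ∧
      ((a.imJ = 0 ∧ a.imK = 0) ∨ (a.re = 0 ∧ a.imI = 0)) ∧
      (∀ (r : ℍ) (v : Hn n), g (r • v) = r • g v) ∧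
      ∀ v : Hn n, f v = a • g v := by
  constructor
  · rintro ⟨⟨κ, hκ⟩, hTU⟩
    rcases subsingleton_or_nontrivial (Hn n) with hE | hE
    · exact ⟨1, f, by simp, Or.inl ⟨rfl, rfl⟩, fun _ _ => Subsingleton.elim _ _,
        fun v => (one_smul ℍ _).symm⟩
    have hI : κ (cq Complex.I) = cq Complex.I ∨ κ (cq Complex.I) = -cq Complex.I := by
      refine hTU.imp (fun h => apply_eq_of_map_smul f.surjective hκ (h _)) (fun h => ?_)
      rw [← cq_neg, ← Complex.conj_I]
      exact apply_eq_of_map_smul f.surjective hκ (h _)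
    obtain ⟨u, hu, rfl⟩ := exists_innerAut_of_map_cq_I κ hI
    obtain ⟨g, hg, hfg⟩ := (exists_linear_eq_smul_iff u f).2 hκ
    exact ⟨u, g, (mem_unitary_iff_re_mul_star _).1 u.2, hu, hg, hfg⟩
  · rintro ⟨a, g, ha, hC, hg, hfg⟩
    let u : unitary ℍ := ⟨a, (mem_unitary_iff_re_mul_star a).2 ha⟩
    refine ⟨⟨innerAut u, (exists_linear_eq_smul_iff u f).1 ⟨g, hg, hfg⟩⟩, ?_⟩
    refine hC.imp (fun ⟨hJ, hK⟩ z => map_smul_of_eq_smul hg hfg (mul_cq_of_imJ_eq_zero hJ hK z))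
      (fun ⟨hre, hI⟩ z => map_smul_of_eq_smul hg hfg (mul_cq_of_re_eq_zero hre hI z))
end

section
/- Let V be a finite-dimensional complex inner product space admitting a nondegenerate skew-symmetric ℂ-bilinear form V × V → ℂ. Then V admits a quaternionic structure compatible with the metric: there exists an ℝ-linear map J : V → V that is conjugate-linear (J(z v) = (conj z) J(v)), satisfies J ∘ J = −id, and is anti-unitary (⟨J u, J v⟩ = ⟨v, u⟩ for all u, v ∈ V). -/
/-!
The Gram matrix `A` of a nondegenerate skew form satisfies `det A = det Aᵀ = (-1)ⁿ det A ≠ 0`,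
so the dimension `n` is even. In even dimension, an orthonormal basis `(eᵢ, fᵢ)` gives the
conjugate-linear `J (∑ aᵢ eᵢ + bᵢ fᵢ) = ∑ conj aᵢ fᵢ - conj bᵢ eᵢ`, which is anti-unitary and
squares to `-1`.
-/

open Module Matrix

theorem Matrix.even_card_of_transpose_eq_neg {n K : Type*} [Fintype n] [DecidableEq n]
    [CommRing K] [IsDomain K] (hK : (-1 : K) ≠ 1) {A : Matrix n n K}
    (hA : Aᵀ = -A) (hdet : A.det ≠ 0) : Even (Fintype.card n) := by
  have h : (-1 : K) ^ Fintype.card n * A.det = 1 * A.det := by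
    rw [← det_neg, ← hA, det_transpose, one_mul]
  exact (neg_one_pow_eq_one_iff_even hK).mp (mul_right_cancel₀ hdet h)

theorem LinearMap.BilinForm.even_finrank_of_separatingLeft_of_skew {K V : Type*} [Field K]
    [AddCommGroup V] [Module K V] [FiniteDimensional K V] (hK : (-1 : K) ≠ 1)
    {f : LinearMap.BilinForm K V} (hskew : ∀ u v, f v u = -f u v) (hf : f.SeparatingLeft) :
    Even (finrank K V) := by
  let b := Module.finBasis K V
  have hnd : f.Nondegenerate :=
    (IsRefl.nondegenerate_iff_separatingLeft fun u v h => by rw [hskew, h, neg_zero]).mpr hf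
  have hA : (toMatrix b f)ᵀ = -toMatrix b f := by
    ext i j
    simp only [transpose_apply, Matrix.neg_apply, toMatrix_apply]
    exact hskew _ _
  simpa using even_card_of_transpose_eq_neg hK hA ((nondegenerate_iff_det_ne_zero b).mp hnd)

namespace EuclideanSpace

variable (ι : Type*)

def quaternionicStructure : EuclideanSpace ℂ (ι × Bool) →ₗ⋆[ℂ] EuclideanSpace ℂ (ι × Bool) where
  toFun x := WithLp.toLp 2 fun
    | (i, true) => starRingEnd ℂ (x (i, false))
    | (i, false) => -starRingEnd ℂ (x (i, true))
  map_add' x y := by ext ⟨i, _ | _⟩ <;> simp [add_comm]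
  map_smul' z x := by ext ⟨i, _ | _⟩ <;> simp

variable {ι}

@[simp] lemma quaternionicStructure_apply_true (x : EuclideanSpace ℂ (ι × Bool)) (i : ι) :
    quaternionicStructure ι x (i, true) = starRingEnd ℂ (x (i, false)) := rfl

@[simp] lemma quaternionicStructure_apply_false (x : EuclideanSpace ℂ (ι × Bool)) (i : ι) :
    quaternionicStructure ι x (i, false) = -starRingEnd ℂ (x (i, true)) := rfl

lemma quaternionicStructure_quaternionicStructure (x : EuclideanSpace ℂ (ι × Bool)) :
    quaternionicStructure ι (quaternionicStructure ι x) = -x := by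
  ext ⟨i, _ | _⟩ <;> simp

lemma inner_quaternionicStructure [Fintype ι] (x y : EuclideanSpace ℂ (ι × Bool)) :
    inner ℂ (quaternionicStructure ι x) (quaternionicStructure ι y) = inner ℂ y x := by
  simp only [PiLp.inner_apply, Fintype.sum_prod_type, Fintype.sum_bool]
  simp only [quaternionicStructure_apply_true, RCLike.inner_apply, RingHomCompTriple.comp_apply,
    RingHom.id_apply, quaternionicStructure_apply_false, map_neg, mul_neg, neg_mul, neg_neg]
  exact Finset.sum_congr rfl fun i _ => by ring

end EuclideanSpace

theorem exists_quaternionicStructure_of_even_finrank {V : Type*} [NormedAddCommGroup V]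
    [InnerProductSpace ℂ V] [FiniteDimensional ℂ V] (h : Even (finrank ℂ V)) :
    ∃ J : V →ₗ⋆[ℂ] V, (∀ v, J (J v) = -v) ∧ ∀ u v, inner ℂ (J v) (J u) = inner ℂ u v := by
  obtain ⟨m, hm⟩ := h
  let e : V ≃ₗᵢ[ℂ] EuclideanSpace ℂ (Fin m × Bool) :=
    ((stdOrthonormalBasis ℂ V).reindex (Fintype.equivFinOfCardEq (by simp [hm]; ring)).symm).repr
  refine ⟨e.symm.toLinearMap ∘ₛₗ EuclideanSpace.quaternionicStructure _ ∘ₛₗ e.toLinearMap,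
    fun v => ?_, fun u v => ?_⟩
  · simp [EuclideanSpace.quaternionicStructure_quaternionicStructure]
  · simp [EuclideanSpace.inner_quaternionicStructure]

/-- A finite-dimensional complex inner product space admitting a nondegenerate
skew-symmetric ℂ-bilinear form carries a quaternionic structure compatible with the metric:
a conjugate-linear map `J` with `J² = -1` which is anti-unitary
(`⟨Ju, Jv⟩ = ⟨v, u⟩`, expressed via Mathlib's inner product, which is conjugate-linear in
its first variable, as `inner (J v) (J u) = inner u v`). -/
theorem symplectic_form_gives_quaternionic_structure
    {V : Type*} [NormedAddCommGroup V] [InnerProductSpace ℂ V] [FiniteDimensional ℂ V]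
    (f : V →ₗ[ℂ] V →ₗ[ℂ] ℂ)
    (hskew : ∀ u v : V, f v u = -f u v)
    (hnd : ∀ u : V, (∀ v : V, f u v = 0) → u = 0) :
    ∃ J : V → V,
      (∀ u v : V, J (u + v) = J u + J v) ∧
      (∀ (z : ℂ) (v : V), J (z • v) = (starRingEnd ℂ z) • J v) ∧
      (∀ v : V, J (J v) = -v) ∧
      (∀ u v : V, (inner ℂ (J v) (J u) : ℂ) = (inner ℂ u v : ℂ)) := by
  obtain ⟨J, hJJ, hJinner⟩ := exists_quaternionicStructure_of_even_finrank
    (LinearMap.BilinForm.even_finrank_of_separatingLeft_of_skew (by norm_num) hskew hnd)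
  exact ⟨J, map_add J, map_smulₛₗ J, hJJ, hJinner⟩
end

section
/- Let V be a nonzero finite-dimensional left module over ℍ and let f : V → V be an ℍ-linear automorphism. Then the determinant of f regarded as an ℝ-linear endomorphism of the underlying real vector space of V is positive. (Hence any two ℍ-bases of V induce the same orientation of the underlying real vector space, giving every ℍ-module a canonical orientation.) -/
open Quaternion

/-!
Through an embedding `ℂ → ℍ` of `ℝ`-algebras, an `ℍ`-linear automorphism `f` is in particular
`ℂ`-linear, and the determinant over `ℝ` of a `ℂ`-linear map is the field norm of its complex
determinant, so `det_ℝ f = |det_ℂ f|² > 0`. (Without a finite basis both determinants take the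
junk value `1`, and the identity still holds.)
-/

theorem LinearEquiv.det_restrictScalars_real_pos {V : Type*} [AddCommGroup V] [Module ℝ V]
    [Module ℂ V] [IsScalarTower ℝ ℂ V] (f : V ≃ₗ[ℂ] V) :
    0 < LinearMap.det (f.toLinearMap.restrictScalars ℝ) := by
  rw [LinearMap.det_restrictScalars, Algebra.norm_complex_apply]
  exact Complex.normSq_pos.mpr f.isUnit_det'.ne_zero

theorem LinearEquiv.det_restrictScalars_real_pos_of_algHom {A V : Type*} [Ring A] [Algebra ℝ A]
    [AddCommGroup V] [Module ℝ V] [Module A V] [IsScalarTower ℝ A V] (φ : ℂ →ₐ[ℝ] A)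
    (f : V ≃ₗ[A] V) :
    0 < LinearMap.det (f.toLinearMap.restrictScalars ℝ) := by
  let : Module ℂ V := Module.compHom V φ.toRingHom
  have : IsScalarTower ℝ ℂ V := ⟨fun r z v => by
    change φ (r • z) • v = r • φ z • v
    rw [φ.map_smul_of_tower, smul_assoc]⟩
  let fℂ : V ≃ₗ[ℂ] V := { f with map_smul' := fun z v => f.map_smul (φ z) v }
  exact fℂ.det_restrictScalars_real_pos

theorem quaternionic_automorphism_det_pos_general
    {V : Type*} [AddCommGroup V] [Module ℝ V] [Module ℍ V] [IsScalarTower ℝ ℍ V]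
    (f : V ≃ₗ[ℍ] V) :
    0 < LinearMap.det (f.toLinearMap.restrictScalars ℝ) :=
  f.det_restrictScalars_real_pos_of_algHom Quaternion.ofComplex

/-- An `ℍ`-linear automorphism of a nonzero finite-dimensional left `ℍ`-module has positive
determinant as an ℝ-linear endomorphism of the underlying real vector space. -/
theorem quaternionic_automorphism_det_pos
    {V : Type*} [AddCommGroup V] [Module ℝ V] [Module ℍ V] [IsScalarTower ℝ ℍ V]
    [Nontrivial V] [FiniteDimensional ℝ V]
    (f : V ≃ₗ[ℍ] V) :
    0 < LinearMap.det (f.toLinearMap.restrictScalars ℝ) :=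
  quaternionic_automorphism_det_pos_general f
end
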